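/- arXiv:math/0007103 — 4 statements merged into one kernel-verified Lean document; each statement's English description precedes it below -/
import Mathlib

section
/- More generally, for any integer p, the operator d_f^{(p)} : Ω^k → Ω^{k+1} defined by d_f^{(p)}(α) = f·dα − (k−p)·df∧α satisfies d_f^{(p)} ∘ d_f^{(p)} = 0. -/
/-!
Write `e = df`. Since `d(f • dα) = e ∧ dα` and `d(e ∧ α) = -e ∧ dα`, the exterior derivative of
`d_f^{(p)} α = f • dα - (k - p) • e ∧ α` is `(k - p + 1) • e ∧ dα`; and since `e ∧ e = 0`,
`e ∧ d_f^{(p)} α = f • e ∧ dα`. Hence `f • d(d_f^{(p)} α) = (k + 1 - p) • e ∧ d_f^{(p)} α`.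
-/

section TwistedDifferential

variable {F : Type*} [Semiring F]
  {Ω : ℕ → Type*} [∀ k, AddCommGroup (Ω k)] [∀ k, Module ℝ (Ω k)] [∀ k, Module F (Ω k)]
  {w : ∀ k, Ω 1 →ₗ[ℝ] Ω k →ₗ[ℝ] Ω (k + 1)}

theorem wedge_wedge_self_eq_zero
    (hww : ∀ (k : ℕ) (β γ : Ω 1) (α : Ω k), w (k + 1) β (w k γ α) = - w (k + 1) γ (w k β α))
    {k : ℕ} (β : Ω 1) (α : Ω k) : w (k + 1) β (w k β α) = 0 :=
  haveI := IsAddTorsionFree.of_isTorsionFree ℝ (Ω (k + 2))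
  self_eq_neg.mp (hww k β β α)

theorem wedge_smul_sub_zsmul_wedge
    (hw_smul_right : ∀ (k : ℕ) (g : F) (β : Ω 1) (α : Ω k), w k β (g • α) = g • w k β α)
    (hww : ∀ (k : ℕ) (β γ : Ω 1) (α : Ω k), w (k + 1) β (w k γ α) = - w (k + 1) γ (w k β α))
    {k : ℕ} (g : F) (c : ℤ) (β : Ω 1) (η : Ω (k + 1)) (α : Ω k) :
    w (k + 1) β (g • η - c • w k β α) = g • w (k + 1) β η := by
  rw [map_sub, map_zsmul, hw_smul_right, wedge_wedge_self_eq_zero hww, smul_zero, sub_zero]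

variable [Algebra ℝ F] {d : ∀ k, Ω k →ₗ[ℝ] Ω (k + 1)} {dF : F →ₗ[ℝ] Ω 1}

theorem d_smul_d_sub_zsmul_wedge
    (hdd : ∀ (k : ℕ) (α : Ω k), d (k + 1) (d k α) = 0)
    (hd_smul : ∀ (k : ℕ) (g : F) (α : Ω k), d k (g • α) = g • d k α + w k (dF g) α)
    (hd_w : ∀ (k : ℕ) (g : F) (α : Ω k), d (k + 1) (w k (dF g) α) = - w (k + 1) (dF g) (d k α))
    {k : ℕ} (g : F) (c : ℤ) (α : Ω k) :
    d (k + 1) (g • d k α - c • w k (dF g) α) = (c + 1) • w (k + 1) (dF g) (d k α) := by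
  rw [map_sub, hd_smul, hdd, smul_zero, zero_add, map_zsmul, hd_w, smul_neg, sub_neg_eq_add,
    add_smul, one_smul]
  exact add_comm _ _

end TwistedDifferential

theorem nambu_dfp_squared_zero_general
    (F : Type) [CommRing F] [Algebra ℝ F]
    (Ω : ℕ → Type) [∀ k, AddCommGroup (Ω k)] [∀ k, Module ℝ (Ω k)]
    [∀ k, Module F (Ω k)]
    (d : ∀ k, Ω k →ₗ[ℝ] Ω (k + 1))
    (dF : F →ₗ[ℝ] Ω 1)
    (w : ∀ k, Ω 1 →ₗ[ℝ] Ω k →ₗ[ℝ] Ω (k + 1))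
    (hdd : ∀ (k : ℕ) (α : Ω k), d (k + 1) (d k α) = 0)
    (hd_smul : ∀ (k : ℕ) (g : F) (α : Ω k), d k (g • α) = g • d k α + w k (dF g) α)
    (hw_smul_right : ∀ (k : ℕ) (g : F) (β : Ω 1) (α : Ω k), w k β (g • α) = g • w k β α)
    (hww : ∀ (k : ℕ) (β γ : Ω 1) (α : Ω k), w (k + 1) β (w k γ α) = - w (k + 1) γ (w k β α))
    (hd_w : ∀ (k : ℕ) (g : F) (α : Ω k), d (k + 1) (w k (dF g) α) = - w (k + 1) (dF g) (d k α))
    (f : F) :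
    ∀ (p : ℤ) (k : ℕ) (α : Ω k),
      f • d (k + 1) (f • d k α - ((k : ℤ) - p) • w k (dF f) α)
        - (((k : ℤ) + 1) - p) • w (k + 1) (dF f)
            (f • d k α - ((k : ℤ) - p) • w k (dF f) α) = 0 := by
  intro p k α
  rw [d_smul_d_sub_zsmul_wedge hdd hd_smul hd_w, wedge_smul_sub_zsmul_wedge hw_smul_right hww,
    smul_comm f, ← sub_smul, show (k : ℤ) - p + 1 - (k + 1 - p) = 0 by ring, zero_smul]

/-- for any integer `p`, the operator
`d_f^{(p)} α = f • dα - (k - p) • (df ∧ α)` on `k`-forms satisfies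
`d_f^{(p)} ∘ d_f^{(p)} = 0`. -/
theorem nambu_dfp_squared_zero
    (F : Type) [CommRing F] [Algebra ℝ F]
    (Ω : ℕ → Type) [∀ k, AddCommGroup (Ω k)] [∀ k, Module ℝ (Ω k)]
    [∀ k, Module F (Ω k)] [∀ k, IsScalarTower ℝ F (Ω k)]
    (d : ∀ k, Ω k →ₗ[ℝ] Ω (k + 1))
    (dF : F →ₗ[ℝ] Ω 1)
    (w : ∀ k, Ω 1 →ₗ[ℝ] Ω k →ₗ[ℝ] Ω (k + 1))
    (hdd : ∀ (k : ℕ) (α : Ω k), d (k + 1) (d k α) = 0)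
    (hddF : ∀ g : F, d 1 (dF g) = 0)
    (hdF_mul : ∀ g h : F, dF (g * h) = g • dF h + h • dF g)
    (hd_smul : ∀ (k : ℕ) (g : F) (α : Ω k), d k (g • α) = g • d k α + w k (dF g) α)
    (hw_smul_left : ∀ (k : ℕ) (g : F) (β : Ω 1) (α : Ω k), w k (g • β) α = g • w k β α)
    (hw_smul_right : ∀ (k : ℕ) (g : F) (β : Ω 1) (α : Ω k), w k β (g • α) = g • w k β α)
    (hww : ∀ (k : ℕ) (β γ : Ω 1) (α : Ω k), w (k + 1) β (w k γ α) = - w (k + 1) γ (w k β α))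
    (hd_w : ∀ (k : ℕ) (g : F) (α : Ω k), d (k + 1) (w k (dF g) α) = - w (k + 1) (dF g) (d k α))
    (f : F) :
    ∀ (p : ℤ) (k : ℕ) (α : Ω k),
      f • d (k + 1) (f • d k α - ((k : ℤ) - p) • w k (dF f) α)
        - (((k : ℤ) + 1) - p) • w (k + 1) (dF f)
            (f • d k α - ((k : ℤ) - p) • w k (dF f) α) = 0 :=
  nambu_dfp_squared_zero_general F Ω d dF w hdd hd_smul hw_smul_right hww hd_w f
end

section
/- If h is a smooth nowhere-vanishing function on M, then the cohomology complexes (Ω^•(M), d_f) and (Ω^•(M), d_{fh}) are isomorphic via the chain map sending a k-form α to α/h^k; consequently H_f^•(M) ≅ H_{fh}^•(M). -/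
/-!
Dividing a `k`-form by `h ^ k` intertwines `d_{fh}` with `d_f`: the Leibniz rule gives
`d (h⁻ᵏ) = -k h^{-(k+1)} dh`, and this term exactly cancels the `dh`-part of `d(fh) = f dh + h df`.
Since `h` is a unit, so is `h⁻ᵏ`, and multiplication by it is bijective.
-/

theorem Derivation.leibniz_pow_of_mul_eq_one {R A M : Type*} [CommRing R] [CommRing A]
    [Algebra R A] [AddCommGroup M] [Module A M] [Module R M]
    (D : Derivation R A M) {a b : A} (hab : a * b = 1) (n : ℕ) :
    D (a ^ n) = -(n • a ^ (n + 1) • D b) := by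
  cases n with
  | zero => simp
  | succ n =>
    rw [D.leibniz_pow, Nat.add_sub_cancel, D.leibniz_of_mul_eq_one hab, neg_smul, smul_neg,
      smul_smul, ← pow_add, smul_neg]

section TwistedDifferential

variable {R F : Type*} [CommRing R] [CommRing F] [Algebra R F]
  {Ω : ℕ → Type*} [∀ k, AddCommGroup (Ω k)] [∀ k, Module R (Ω k)] [∀ k, Module F (Ω k)]
  (d : ∀ k, Ω k →ₗ[R] Ω (k + 1)) (D : Derivation R F (Ω 1))
  (w : ∀ k, Ω 1 →ₗ[R] Ω k →ₗ[R] Ω (k + 1))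

/-- The differential `d_f α = f dα - k df ∧ α` on `k`-forms, with `w k β α` standing for `β ∧ α`. -/
def twistedDiff (f : F) (k : ℕ) (α : Ω k) : Ω (k + 1) :=
  f • d k α - k • w k (D f) α

theorem smul_pow_twistedDiff_mul
    (hd_smul : ∀ (k : ℕ) (g : F) (α : Ω k), d k (g • α) = g • d k α + w k (D g) α)
    (hw_smul_left : ∀ (k : ℕ) (g : F) (β : Ω 1) (α : Ω k), w k (g • β) α = g • w k β α)
    (hw_smul_right : ∀ (k : ℕ) (g : F) (β : Ω 1) (α : Ω k), w k β (g • α) = g • w k β α)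
    {f h hinv : F} (hh : h * hinv = 1) (k : ℕ) (α : Ω k) :
    hinv ^ (k + 1) • twistedDiff d D w (f * h) k α = twistedDiff d D w f k (hinv ^ k • α) := by
  have hDpow : D (hinv ^ k) = -(k • hinv ^ (k + 1) • D h) :=
    D.leibniz_pow_of_mul_eq_one (by rw [mul_comm, hh]) k
  simp only [twistedDiff, D.leibniz, hd_smul, hDpow, map_add, map_neg, map_nsmul,
    LinearMap.add_apply, LinearMap.neg_apply, LinearMap.smul_apply, hw_smul_left, hw_smul_right]
  match_scalars
  · linear_combination (hinv ^ k * f) * hh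
  · ring
  · linear_combination (-((k : F) * hinv ^ k)) * hh

end TwistedDifferential

theorem nambu_cohomology_invariance_unit_general
    (F : Type) [CommRing F] [Algebra ℝ F]
    (Ω : ℕ → Type) [∀ k, AddCommGroup (Ω k)] [∀ k, Module ℝ (Ω k)]
    [∀ k, Module F (Ω k)]
    (d : ∀ k, Ω k →ₗ[ℝ] Ω (k + 1))
    (dF : F →ₗ[ℝ] Ω 1)
    (w : ∀ k, Ω 1 →ₗ[ℝ] Ω k →ₗ[ℝ] Ω (k + 1))
    (hdF_mul : ∀ g h : F, dF (g * h) = g • dF h + h • dF g)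
    (hd_smul : ∀ (k : ℕ) (g : F) (α : Ω k), d k (g • α) = g • d k α + w k (dF g) α)
    (hw_smul_left : ∀ (k : ℕ) (g : F) (β : Ω 1) (α : Ω k), w k (g • β) α = g • w k β α)
    (hw_smul_right : ∀ (k : ℕ) (g : F) (β : Ω 1) (α : Ω k), w k β (g • α) = g • w k β α)
    (f h hinv : F) (hh : h * hinv = 1) :
    (∀ (k : ℕ) (α : Ω k),
        hinv ^ (k + 1) • ((f * h) • d k α - k • w k (dF (f * h)) α)
          = f • d k (hinv ^ k • α) - k • w k (dF f) (hinv ^ k • α))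
    ∧ ∀ k : ℕ, Function.Bijective (fun α : Ω k => hinv ^ k • α) :=
  ⟨smul_pow_twistedDiff_mul d (Derivation.mk' dF hdF_mul) w hd_smul hw_smul_left hw_smul_right hh,
    fun k => ((IsUnit.of_mul_eq_one_right h hh).pow k).smul_bijective⟩

/-- if `h` is a nowhere-vanishing (hence invertible) smooth function,
then `α ↦ α / h ^ k = hinv ^ k • α` is a bijective chain map from the complex
`(Ω^•, d_{f h})` to `(Ω^•, d_f)`; consequently `H_f^• ≅ H_{f h}^•`. -/
theorem nambu_cohomology_invariance_unit
    (F : Type) [CommRing F] [Algebra ℝ F]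
    (Ω : ℕ → Type) [∀ k, AddCommGroup (Ω k)] [∀ k, Module ℝ (Ω k)]
    [∀ k, Module F (Ω k)] [∀ k, IsScalarTower ℝ F (Ω k)]
    (d : ∀ k, Ω k →ₗ[ℝ] Ω (k + 1))
    (dF : F →ₗ[ℝ] Ω 1)
    (w : ∀ k, Ω 1 →ₗ[ℝ] Ω k →ₗ[ℝ] Ω (k + 1))
    (hdd : ∀ (k : ℕ) (α : Ω k), d (k + 1) (d k α) = 0)
    (hddF : ∀ g : F, d 1 (dF g) = 0)
    (hdF_mul : ∀ g h : F, dF (g * h) = g • dF h + h • dF g)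
    (hd_smul : ∀ (k : ℕ) (g : F) (α : Ω k), d k (g • α) = g • d k α + w k (dF g) α)
    (hw_smul_left : ∀ (k : ℕ) (g : F) (β : Ω 1) (α : Ω k), w k (g • β) α = g • w k β α)
    (hw_smul_right : ∀ (k : ℕ) (g : F) (β : Ω 1) (α : Ω k), w k β (g • α) = g • w k β α)
    (hww : ∀ (k : ℕ) (β γ : Ω 1) (α : Ω k), w (k + 1) β (w k γ α) = - w (k + 1) γ (w k β α))
    (hd_w : ∀ (k : ℕ) (g : F) (α : Ω k), d (k + 1) (w k (dF g) α) = - w (k + 1) (dF g) (d k α))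
    (f h hinv : F) (hh : h * hinv = 1) :
    (∀ (k : ℕ) (α : Ω k),
        hinv ^ (k + 1) • ((f * h) • d k α - k • w k (dF (f * h)) α)
          = f • d k (hinv ^ k • α) - k • w k (dF f) (hinv ^ k • α))
    ∧ ∀ k : ℕ, Function.Bijective (fun α : Ω k => hinv ^ k • α) :=
  nambu_cohomology_invariance_unit_general F Ω d dF w hdF_mul hd_smul hw_smul_left hw_smul_right f h
    hinv hh
end

section
/- Let f be a germ at 0 of a function on K^n (K = ℝ or ℂ) of finite codimension with f(0)=0, and let p > 0 be an integer. If a germ g satisfies f·dg + p·g·df = 0, then g = 0. (Equivalently, H_{f,p}^0(K^n) = {0} for p > 0.) -/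
/-!
Multiplying the equation `f • dg + p • g • df = 0` by `f ^ (p - 1)` turns it, by the Leibniz
rule, into `d (f ^ p * g) = 0`. So `f ^ p * g` is constant; its value at the origin is `0`
because `f` vanishes there, hence `f ^ p * g = 0`, and `g = 0` since `f`, and with it `f ^ p`,
is not a zero divisor.
-/

theorem Derivation.leibniz_pow_succ_mul {R A M : Type*} [CommSemiring R] [CommSemiring A]
    [Algebra R A] [AddCommMonoid M] [Module R M] [Module A M] (D : Derivation R A M)
    (a b : A) (n : ℕ) :
    D (a ^ (n + 1) * b) = a ^ n • (a • D b + (n + 1) • b • D a) := by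
  rw [D.leibniz, D.leibniz_pow, Nat.add_sub_cancel, smul_add, smul_smul, ← pow_succ,
    smul_comm b, smul_comm (a ^ n) (n + 1), smul_comm b (a ^ n)]

/-- `ev0` is evaluation at the origin, and `hconst` says that germs with vanishing
differential are constant. -/
theorem nambu_H0_p_pos_general
    (K : Type) [Field K]
    (F : Type) [CommRing F] [Algebra K F]
    (Ω : ℕ → Type) [∀ k, AddCommGroup (Ω k)] [∀ k, Module K (Ω k)]
    [∀ k, Module F (Ω k)]
    (dF : F →ₗ[K] Ω 1)
    (hdF_mul : ∀ g h : F, dF (g * h) = g • dF h + h • dF g)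
    (f : F)
    (ev0 : F →+* K) (hf0 : ev0 f = 0)
    (hreg : ∀ g : F, f * g = 0 → g = 0)
    (hconst : ∀ g : F, dF g = 0 → g = algebraMap K F (ev0 g))
 :
    ∀ (p : ℕ), 0 < p → ∀ g : F, f • dF g + p • (g • dF f) = 0 → g = 0 := by
  rintro p hp g hg
  obtain ⟨n, rfl⟩ := Nat.exists_eq_add_one_of_ne_zero hp.ne'
  have hD : dF (f ^ (n + 1) * g) = 0 := by
    have := (Derivation.mk' dF hdF_mul : Derivation K F (Ω 1)).leibniz_pow_succ_mul f g n
    rwa [Derivation.coe_mk', hg, smul_zero] at this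
  have hfg : f ^ (n + 1) * g = 0 := by
    rw [hconst _ hD, map_mul, map_pow, hf0, zero_pow n.succ_ne_zero, zero_mul, map_zero]
  have hf : f ∈ nonZeroDivisors F := mem_nonZeroDivisors_iff_left.2 hreg
  exact (mul_left_mem_nonZeroDivisors_eq_zero_iff (pow_mem hf _)).1 hfg

/-- for a germ `f` at `0` of finite codimension with `f 0 = 0`
(finite codimension entailing that `f` is not a zero divisor, `hreg`), and
`p > 0`: if `f • dg + p • (g • df) = 0` then `g = 0`, i.e. `H_{f,p}^0 = 0`.
`ev0` is evaluation at the origin and `hconst` says that germs with vanishing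
differential are constant. -/
theorem nambu_H0_p_pos
    (K : Type) [Field K] [CharZero K]
    (F : Type) [CommRing F] [Algebra K F]
    (Ω : ℕ → Type) [∀ k, AddCommGroup (Ω k)] [∀ k, Module K (Ω k)]
    [∀ k, Module F (Ω k)] [∀ k, IsScalarTower K F (Ω k)]
    (d : ∀ k, Ω k →ₗ[K] Ω (k + 1))
    (dF : F →ₗ[K] Ω 1)
    (w : ∀ k, Ω 1 →ₗ[K] Ω k →ₗ[K] Ω (k + 1))
    (hdd : ∀ (k : ℕ) (α : Ω k), d (k + 1) (d k α) = 0)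
    (hddF : ∀ g : F, d 1 (dF g) = 0)
    (hdF_mul : ∀ g h : F, dF (g * h) = g • dF h + h • dF g)
    (hd_smul : ∀ (k : ℕ) (g : F) (α : Ω k), d k (g • α) = g • d k α + w k (dF g) α)
    (hw_smul_left : ∀ (k : ℕ) (g : F) (β : Ω 1) (α : Ω k), w k (g • β) α = g • w k β α)
    (hw_smul_right : ∀ (k : ℕ) (g : F) (β : Ω 1) (α : Ω k), w k β (g • α) = g • w k β α)
    (hww : ∀ (k : ℕ) (β γ : Ω 1) (α : Ω k), w (k + 1) β (w k γ α) = - w (k + 1) γ (w k β α))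
    (hd_w : ∀ (k : ℕ) (g : F) (α : Ω k), d (k + 1) (w k (dF g) α) = - w (k + 1) (dF g) (d k α))
    (f : F) (N : ℕ) (hN : 0 < N)
    (ev0 : F →+* K) (hf0 : ev0 f = 0)
    (hreg : ∀ g : F, f * g = 0 → g = 0)
    (hconst : ∀ g : F, dF g = 0 → g = algebraMap K F (ev0 g))
 :
    ∀ (p : ℕ), 0 < p → ∀ g : F, f • dF g + p • (g • dF f) = 0 → g = 0 :=
  nambu_H0_p_pos_general K F Ω dF hdF_mul f ev0 hf0 hreg hconst
end

section
/- Let W = Σ_{i=1}^n w_i x_i ∂/∂x_i with positive integer weights w_i, and let p = Σ k_i w_i for some k_i ∈ ℕ. If g is a germ (formal or analytic) of a function whose ∞-jet at 0 has order > p (all terms of quasidegree > p), then there exists a germ h with W·h − p·h = g. Similarly, for any i-form α of order > p there exists an i-form β with L_W β − p·β = α. -/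
/-!
In the monomial basis the Euler field `W` is diagonal: `W·x^m = (Σ mᵢ wᵢ) x^m`, and on the
component `α_J` of a form the Lie derivative adds the constant `Σ_t w (J t)`. Hence
`L_W - p` multiplies the coefficient of `x^m` by a scalar that vanishes only on monomials of
(shifted) quasidegree `p`, where the right-hand side has no coefficient, and one solves by
dividing coefficientwise.
-/

open MvPowerSeries

theorem MvPowerSeries.exists_eq_of_coeff_eq_mul {σ K : Type*} [Field K]
    (L : MvPowerSeries σ K → MvPowerSeries σ K) (c : (σ →₀ ℕ) → K)
    (hL : ∀ h m, coeff m (L h) = c m * coeff m h)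
    (g : MvPowerSeries σ K) (hg : ∀ m, c m = 0 → coeff m g = 0) :
    ∃ h, L h = g := by
  let h : MvPowerSeries σ K := fun m => (c m)⁻¹ * coeff m g
  refine ⟨h, ext fun m => ?_⟩
  rw [hL, show coeff m h = (c m)⁻¹ * coeff m g from rfl]
  by_cases hc : c m = 0
  · simp [hc, hg m hc]
  · exact mul_inv_cancel_left₀ hc _

theorem MvPowerSeries.exists_euler_add_sub_eq {σ K : Type*} [Field K] [CharZero K]
    (deg : (σ →₀ ℕ) → ℕ) (Wd : MvPowerSeries σ K → MvPowerSeries σ K)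
    (hWd : ∀ g m, coeff m (Wd g) = deg m • coeff m g) (d p : ℕ)
    (g : MvPowerSeries σ K) (hg : ∀ m, deg m + d ≤ p → coeff m g = 0) :
    ∃ h, Wd h + d • h - p • h = g := by
  refine exists_eq_of_coeff_eq_mul _ (fun m => ((deg m + d : ℕ) : K) - p) (fun h m => ?_) g
    fun m hm => hg m (Nat.cast_injective (sub_eq_zero.mp hm)).le
  rw [map_sub, map_add, map_nsmul, map_nsmul, hWd]
  simp only [nsmul_eq_mul]
  push_cast
  ring

theorem quasihomogeneous_euler_solvable_general
    (K : Type) [Field K] [CharZero K] (n : ℕ)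
    (w : Fin n → ℕ) (p : ℕ)
    (Wd : MvPowerSeries (Fin n) K → MvPowerSeries (Fin n) K)
    (hWd : ∀ (g : MvPowerSeries (Fin n) K) (m : Fin n →₀ ℕ),
      MvPowerSeries.coeff m (Wd g) = (∑ i, m i * w i : ℕ) • MvPowerSeries.coeff m g) :
    (∀ g : MvPowerSeries (Fin n) K,
        (∀ m : Fin n →₀ ℕ, (∑ i, m i * w i) ≤ p → MvPowerSeries.coeff m g = 0) →
        ∃ h : MvPowerSeries (Fin n) K, Wd h - p • h = g)
    ∧ ∀ (i : ℕ) (α : (Fin i → Fin n) → MvPowerSeries (Fin n) K),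
        (∀ (J : Fin i → Fin n) (m : Fin n →₀ ℕ),
          (∑ t, m t * w t) + (∑ t, w (J t)) ≤ p → MvPowerSeries.coeff m (α J) = 0) →
        ∃ β : (Fin i → Fin n) → MvPowerSeries (Fin n) K,
          (fun J => Wd (β J) + (∑ t, w (J t)) • β J - p • β J) = α := by
  constructor
  · intro g hg
    simpa using exists_euler_add_sub_eq _ Wd hWd 0 p g (by simpa using hg)
  · intro i α hα
    choose β hβ using fun J => exists_euler_add_sub_eq _ Wd hWd (∑ t, w (J t)) p (α J) (hα J)
    exact ⟨β, funext hβ⟩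

/-- let `W = Σ wᵢ xᵢ ∂ᵢ` with positive integer weights and
`p = Σ kᵢ wᵢ`.  If every monomial of the formal power series `g` has
quasidegree `> p`, then `W·h - p • h = g` is solvable; similarly for `i`-forms
(represented by their component family `J ↦ α_J`, the coefficient of `dx_{J 0}
∧ … ∧ dx_{J (i-1)}`, on which the Lie derivative acts as
`L_W α = (J ↦ W·(α J) + (Σ_t w (J t)) • α J)`).  `Wd` is the derivation along
`W`, characterized on coefficients by `hWd`. -/
theorem quasihomogeneous_euler_solvable
    (K : Type) [Field K] [CharZero K] (n : ℕ)
    (w : Fin n → ℕ) (hw : ∀ i, 0 < w i)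
    (kk : Fin n → ℕ) (p : ℕ) (hp : p = ∑ i, kk i * w i)
    (Wd : MvPowerSeries (Fin n) K → MvPowerSeries (Fin n) K)
    (hWd : ∀ (g : MvPowerSeries (Fin n) K) (m : Fin n →₀ ℕ),
      MvPowerSeries.coeff m (Wd g) = (∑ i, m i * w i : ℕ) • MvPowerSeries.coeff m g) :
    (∀ g : MvPowerSeries (Fin n) K,
        (∀ m : Fin n →₀ ℕ, (∑ i, m i * w i) ≤ p → MvPowerSeries.coeff m g = 0) →
        ∃ h : MvPowerSeries (Fin n) K, Wd h - p • h = g)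
    ∧ ∀ (i : ℕ) (α : (Fin i → Fin n) → MvPowerSeries (Fin n) K),
        (∀ (J : Fin i → Fin n) (m : Fin n →₀ ℕ),
          (∑ t, m t * w t) + (∑ t, w (J t)) ≤ p → MvPowerSeries.coeff m (α J) = 0) →
        ∃ β : (Fin i → Fin n) → MvPowerSeries (Fin n) K,
          (fun J => Wd (β J) + (∑ t, w (J t)) • β J - p • β J) = α :=
  quasihomogeneous_euler_solvable_general K n w p Wd hWd
end
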